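/- For k ≥ 1, Z_w(k)(t) = t^p ((1-bt)(A_w(t)-1) + t^p)^{k-1} / ((1-bt)A_w(t) + t^p)^{k+1}, where A_w is the autocorrelation polynomial; in particular Z_w(k)(1/b) = b^p for all k ≥ 1, and Z_w(0)(1/b) = b^p A_w(1/b). -/

import Mathlib

open scoped BigOperators
open PowerSeries

/-- Number of (possibly overlapping) occurrences of the block `w` in `X`. -/
def occCount {α : Type*} [DecidableEq α] (w X : List α) : ℕ :=
  ((List.range X.length).filter fun i => (X.drop i).take w.length = w).length

/-- Number of strings of length `l` over `{0,…,b-1}` with exactly `k` occurrences of `w`,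
starting with `x` and ending with `y` (an empty `x` or `y` imposes no constraint). -/
def Nxy (b : ℕ) (w x y : List (Fin b)) (k l : ℕ) : ℕ :=
  Fintype.card {f : Fin l → Fin b //
    occCount w (List.ofFn f) = k ∧ x <+: List.ofFn f ∧ y <:+ List.ofFn f}

/-- The generating series `Z_w(x,k,y)(t)` as a formal power series over `ℚ`. -/
noncomputable def Zser (b : ℕ) (w x y : List (Fin b)) (k : ℕ) : PowerSeries ℚ :=
  PowerSeries.mk fun l => (Nxy b w x y k l : ℚ)

/-- The autocorrelation power series (polynomial) `A_w = Σ_{0≤i<p} c_i t^i`, where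
`c_i = 1` iff the length-`(p-i)` prefix of `w` equals its length-`(p-i)` suffix. -/
noncomputable def Aw (b : ℕ) (w : List (Fin b)) : PowerSeries ℚ :=
  ∑ i ∈ Finset.range w.length,
    if w.take (w.length - i) = w.drop i then (X : PowerSeries ℚ) ^ i else 0

/-!
Occurrences of `w` are counted by their end positions. Cutting a word just after its first
occurrence, and the remainder just after each further occurrence, factors the words with `k + 1`
occurrences as `M · Dᵏ · E`: `M` (resp. `D`) collects the words whose only new occurrence is a
suffix, with nothing (resp. a copy of `w`) in front, and `E` the words creating no new occurrence
after a copy of `w`; `N` collects the words without occurrence. Appending one letter gives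
`(1 - b t) N = 1 - M` and `(1 - b t) E = 1 - D`; cutting `u w` (resp. `w u w`) after its first
new occurrence leaves a proper self-overlap of `w`, whence `t ^ p N = M A` and
`t ^ p E + A - 1 = D A`. So `F = (1 - b t) A + t ^ p` satisfies `F M = t ^ p`, `F E = 1`,
`F D = F - (1 - b t)` and `F N = A`, which is the formula.

At `t = 1 / b` the factor `1 - b t` vanishes and `F = b ^ (-p)`. The series `N` and `E` converge
there because the last `p` letters of an occurrence-free word of length `n + p` are not `w`, so
its count is at most `(b ^ p - 1)` times that at length `n`; the others are then obtained by
ring operations. Evaluating gives `M = D = 1`, `E = b ^ p` and `N = b ^ p A`.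
-/

open Finset PowerSeries

namespace Occurrences

section Lists

variable {α : Type*}

theorem suffix_append_iff_of_length_le {w x z : List α} (h : w.length ≤ z.length) :
    w <:+ x ++ z ↔ w <:+ z :=
  ⟨fun hw => List.suffix_of_suffix_length_le hw (List.suffix_append x z) h,
    fun hw => hw.trans (List.suffix_append x z)⟩

theorem suffix_append_iff_of_suffix {w y t : List α} (h : w <:+ y) :
    w <:+ y ++ t ↔ w <:+ w ++ t := by
  obtain ⟨y', rfl⟩ := h
  rw [List.append_assoc]
  exact suffix_append_iff_of_length_le (by simp)

theorem suffix_append_self_iff {w z : List α} {i : ℕ} (hz : z.length = i) (hi : i ≤ w.length) :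
    w <:+ w ++ z ↔ w.take (w.length - i) = w.drop i ∧ z = w.drop (w.length - i) := by
  rw [List.suffix_iff_eq_drop, List.length_append, Nat.add_sub_cancel_left, hz,
    List.drop_append_of_le_length hi]
  constructor
  · intro h
    have := List.append_inj (h.symm.trans (List.take_append_drop (w.length - i) w).symm)
      (by simp)
    exact ⟨this.1.symm, this.2⟩
  · rintro ⟨h1, rfl⟩
    rw [← h1, List.take_append_drop]

theorem take_drop_eq_iff {w s : List α} (hw : w ≠ []) {i : ℕ} :
    (s.drop i).take w.length = w ↔ i + w.length ≤ s.length ∧ w <:+ s.take (i + w.length) := by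
  have hp : 0 < w.length := List.length_pos_iff.2 hw
  have hlen : ((s.drop i).take w.length).length = min w.length (s.length - i) := by simp
  rw [List.take_add]
  constructor
  · intro h
    refine ⟨?_, by rw [h]; exact List.suffix_append _ _⟩
    rw [h] at hlen
    omega
  · rintro ⟨hi, h⟩
    rw [suffix_append_iff_of_length_le (by rw [hlen]; omega)] at h
    exact (h.eq_of_length (by rw [hlen]; omega)).symm

theorem card_pos_of_ne_nil [Fintype α] {w : List α} (hw : w ≠ []) : 0 < Fintype.card α :=
  Fintype.card_pos_iff.2 ⟨w.head hw⟩

end Lists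

section Words

variable {α : Type*} [Fintype α] [DecidableEq α]

variable (α) in
def words (n : ℕ) : Finset (List α) := (univ : Finset (Fin n → α)).image List.ofFn

@[simp] theorem mem_words {n : ℕ} {s : List α} : s ∈ words α n ↔ s.length = n := by
  simp only [words, mem_image, mem_univ, true_and]
  refine ⟨?_, ?_⟩
  · rintro ⟨f, rfl⟩
    exact List.length_ofFn
  · rintro rfl
    exact ⟨s.get, List.ofFn_get s⟩

theorem card_words (n : ℕ) : #(words α n) = Fintype.card α ^ n := by
  rw [words, card_image_of_injective _ List.ofFn_injective, card_univ, Fintype.card_fun,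
    Fintype.card_fin]

theorem words_zero : words α 0 = {[]} := by
  ext s
  simp [List.length_eq_zero_iff]

theorem card_filter_words_succ (P : List α → Prop) [DecidablePred P] (n : ℕ) :
    #{s ∈ words α (n + 1) | P s} = ∑ a, #{s ∈ words α n | P (s ++ [a])} := by
  rw [← card_sigma]
  symm
  refine card_bij (fun x _ => x.2 ++ [x.1]) ?_ ?_ ?_
  · rintro ⟨a, s⟩ h
    simp only [mem_sigma, mem_univ, mem_filter, mem_words, true_and] at h ⊢
    simpa using h
  · rintro ⟨a, s⟩ - ⟨a', s'⟩ - h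
    obtain ⟨rfl, h'⟩ := List.append_inj' h rfl
    simp_all
  · intro s hs
    simp only [mem_filter, mem_words] at hs
    have hne : s ≠ [] := by
      rintro rfl
      simp at hs
    refine ⟨⟨s.getLast hne, s.dropLast⟩, ?_, List.dropLast_append_getLast hne⟩
    simp [List.dropLast_append_getLast hne, hs]

theorem card_filter_words_eq_sum_antidiagonal {P Q R : List α → Prop} [DecidablePred P]
    [DecidablePred Q] [DecidablePred R] (hQ : ∀ v t, Q v → Q (v ++ t) → t = [])
    (hP : ∀ s, P s ↔ ∃ v z, s = v ++ z ∧ Q v ∧ R z) (n : ℕ) :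
    #{s ∈ words α n | P s} =
      ∑ ij ∈ antidiagonal n, #{v ∈ words α ij.1 | Q v} * #{z ∈ words α ij.2 | R z} := by
  simp_rw [← card_product]
  rw [← card_sigma]
  symm
  refine card_bij (fun x _ => x.2.1 ++ x.2.2) ?_ ?_ ?_
  · rintro ⟨⟨i, j⟩, v, z⟩ h
    simp only [mem_sigma, HasAntidiagonal.mem_antidiagonal, mem_product, mem_filter,
      mem_words] at h ⊢
    exact ⟨by simp [h.2.1.1, h.2.2.1, h.1], (hP _).2 ⟨v, z, rfl, h.2.1.2, h.2.2.2⟩⟩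
  · rintro ⟨⟨i, j⟩, v, z⟩ h ⟨⟨i', j'⟩, v', z'⟩ h' heq
    simp only [mem_sigma, HasAntidiagonal.mem_antidiagonal, mem_product, mem_filter,
      mem_words] at h h' heq
    obtain rfl : v = v' := by
      rcases List.append_eq_append_iff.1 heq with ⟨t, rfl, -⟩ | ⟨t, rfl, -⟩
      · rw [hQ v t h.2.1.2 h'.2.1.2, List.append_nil]
      · rw [hQ v' t h'.2.1.2 h.2.1.2, List.append_nil]
    obtain rfl : z = z' := List.append_cancel_left heq
    obtain rfl : i = i' := h.2.1.1.symm.trans h'.2.1.1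
    obtain rfl : j = j' := h.2.2.1.symm.trans h'.2.2.1
    rfl
  · intro s hs
    obtain ⟨v, z, rfl, hv, hz⟩ := (hP s).1 (mem_filter.1 hs).2
    refine ⟨⟨(v.length, z.length), v, z⟩, ?_, rfl⟩
    simp only [mem_filter, mem_words, List.length_append] at hs
    simp [hs.1, hv, hz]

end Words

section NewEnds

variable {α : Type*} [DecidableEq α]

/-- The occurrences of `w` in `y ++ s` that end inside `s`, counted by their end positions. -/
def newEnds (w y s : List α) : ℕ := #{j ∈ range s.length | w <:+ y ++ s.take (j + 1)}

@[simp] theorem newEnds_nil (w y : List α) : newEnds w y [] = 0 := rfl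

theorem newEnds_append (w y s t : List α) :
    newEnds w y (s ++ t) = newEnds w y s + newEnds w (y ++ s) t := by
  simp only [newEnds, card_filter, List.length_append, sum_range_add]
  congr 1
  · refine sum_congr rfl fun j hj => ?_
    rw [List.take_append_of_le_length (by simp at hj; omega)]
  · refine sum_congr rfl fun j _ => ?_
    rw [Nat.add_assoc, List.take_length_add_append, List.append_assoc]

theorem newEnds_singleton (w y : List α) (a : α) :
    newEnds w y [a] = if w <:+ y ++ [a] then 1 else 0 := by
  rw [newEnds, card_filter, List.length_singleton, sum_range_one, List.take_one, List.head?_cons,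
    Option.toList_some]

theorem newEnds_append_singleton (w y s : List α) (a : α) :
    newEnds w y (s ++ [a]) = newEnds w y s + if w <:+ y ++ s ++ [a] then 1 else 0 := by
  rw [newEnds_append, newEnds_singleton]

theorem newEnds_le_append (w y s t : List α) : newEnds w y s ≤ newEnds w y (s ++ t) := by
  rw [newEnds_append]
  exact Nat.le_add_right _ _

theorem newEnds_pos {w y s : List α} (hs : s ≠ []) (h : w <:+ y ++ s) : 0 < newEnds w y s := by
  rw [← List.dropLast_append_getLast hs, newEnds_append_singleton, if_pos]
  · exact Nat.succ_pos _
  · rwa [List.append_assoc, List.dropLast_append_getLast hs]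

theorem newEnds_eq_of_suffix {w y : List α} (h : w <:+ y) (s : List α) :
    newEnds w y s = newEnds w w s := by
  simp only [newEnds]
  congr 1
  exact filter_congr fun j _ => suffix_append_iff_of_suffix h

theorem newEnds_nil_left_eq_occCount {w : List α} (hw : w ≠ []) (s : List α) :
    newEnds w [] s = occCount w s := by
  have hocc : occCount w s = #{i ∈ range s.length | (s.drop i).take w.length = w} := rfl
  have hp : 0 < w.length := List.length_pos_iff.2 hw
  rw [hocc, newEnds]
  refine card_nbij' (· + 1 - w.length) (· + w.length - 1) ?_ ?_ ?_ ?_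
  · intro j hj
    simp only [mem_coe, mem_filter, mem_range, List.nil_append] at hj ⊢
    have hj' := hj.2.length_le
    simp only [List.length_take] at hj'
    refine ⟨by omega, (take_drop_eq_iff hw).2 ⟨by omega, ?_⟩⟩
    rw [show j + 1 - w.length + w.length = j + 1 by omega]
    exact hj.2
  · intro i hi
    simp only [mem_coe, mem_filter, mem_range, List.nil_append] at hi ⊢
    obtain ⟨hi, h⟩ := (take_drop_eq_iff hw).1 hi.2
    refine ⟨by omega, ?_⟩
    rwa [show i + w.length - 1 + 1 = i + w.length by omega]
  · intro j hj
    simp only [mem_coe, mem_filter, mem_range, List.nil_append] at hj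
    have hj' := hj.2.length_le
    simp only [List.length_take] at hj'
    simp only
    omega
  · intro i _
    simp only
    omega

theorem exists_append_newEnds_eq_one {w y s : List α} (h : 0 < newEnds w y s) :
    ∃ v z, s = v ++ z ∧ newEnds w y v = 1 ∧ w <:+ y ++ v := by
  induction s using List.reverseRecOn with
  | nil => simp at h
  | append_singleton s a ih =>
    by_cases hs : 0 < newEnds w y s
    · obtain ⟨v, z, rfl, hv⟩ := ih hs
      exact ⟨v, z ++ [a], by simp, hv⟩
    · rw [newEnds_append_singleton] at h
      have hsuf : w <:+ y ++ (s ++ [a]) := by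
        by_contra hc
        rw [if_neg (by rwa [List.append_assoc])] at h
        omega
      refine ⟨s ++ [a], [], by simp, ?_, hsuf⟩
      rw [newEnds_append_singleton, if_pos (by rwa [← List.append_assoc] at hsuf)]
      omega

theorem newEnds_append_of_suffix {w y v : List α} (h : w <:+ y ++ v) (z : List α) :
    newEnds w y (v ++ z) = newEnds w y v + newEnds w w z := by
  rw [newEnds_append, newEnds_eq_of_suffix h]

theorem eq_nil_of_newEnds_eq_one {w y v t : List α} (hv : newEnds w y v = 1 ∧ w <:+ y ++ v)
    (hvt : newEnds w y (v ++ t) = 1 ∧ w <:+ y ++ (v ++ t)) : t = [] := by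
  by_contra ht
  have := newEnds_pos (w := w) (y := y ++ v) ht (by rw [List.append_assoc]; exact hvt.2)
  have := hvt.1
  rw [newEnds_append, hv.1] at this
  omega

theorem newEnds_eq_succ_iff {w y s : List α} {k : ℕ} :
    newEnds w y s = k + 1 ↔
      ∃ v z, s = v ++ z ∧ (newEnds w y v = 1 ∧ w <:+ y ++ v) ∧ newEnds w w z = k := by
  constructor
  · intro h
    obtain ⟨v, z, rfl, hv⟩ := exists_append_newEnds_eq_one (show 0 < newEnds w y s by omega)
    refine ⟨v, z, rfl, hv, ?_⟩
    rw [newEnds_append_of_suffix hv.2, hv.1] at h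
    omega
  · rintro ⟨v, z, rfl, hv, hz⟩
    rw [newEnds_append_of_suffix hv.2, hv.1, hz, add_comm]

theorem overlap_iff {w y s : List α} :
    (s ≠ [] ∧ w <:+ y ++ s ∧ newEnds w y (s.take (s.length - w.length)) = 0) ↔
      ∃ v z, s = v ++ z ∧ (newEnds w y v = 1 ∧ w <:+ y ++ v) ∧
        (z.length < w.length ∧ w <:+ w ++ z) := by
  constructor
  · rintro ⟨hs, hsuf, hpre⟩
    obtain ⟨v, z, rfl, hv⟩ := exists_append_newEnds_eq_one (newEnds_pos hs hsuf)
    refine ⟨v, z, rfl, hv, ?_, ?_⟩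
    · by_contra hz
      have : newEnds w y v ≤ newEnds w y ((v ++ z).take ((v ++ z).length - w.length)) := by
        rw [List.take_append, List.take_of_length_le (by simp; omega)]
        exact newEnds_le_append _ _ _ _
      omega
    · rwa [← List.append_assoc, suffix_append_iff_of_suffix hv.2] at hsuf
  · rintro ⟨v, z, rfl, hv, hz, hzw⟩
    have hv0 : v ≠ [] := by
      rintro rfl
      simp at hv
    refine ⟨by simp [hv0], by rwa [← List.append_assoc, suffix_append_iff_of_suffix hv.2], ?_⟩
    have hm : (v ++ z).length - w.length < v.length := by
      have := List.length_pos_iff.2 hv0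
      simp only [List.length_append]
      omega
    rw [List.take_append_of_le_length hm.le]
    -- a proper prefix of `v` misses the only new occurrence of `v`, which ends at its end
    have hpos := newEnds_pos (w := w) (y := y ++ v.take ((v ++ z).length - w.length))
      (s := v.drop ((v ++ z).length - w.length)) (by simp; omega)
      (by rw [List.append_assoc, List.take_append_drop]; exact hv.2)
    have hone := hv.1
    rw [← List.take_append_drop ((v ++ z).length - w.length) v, newEnds_append] at hone
    omega

theorem overlap_iff_or {w y s : List α} (hw : w ≠ []) :
    (s ≠ [] ∧ w <:+ y ++ s ∧ newEnds w y (s.take (s.length - w.length)) = 0) ↔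
      (w <:+ s ∧ newEnds w y (s.take (s.length - w.length)) = 0) ∨
        (s ≠ [] ∧ s.length < w.length ∧ w <:+ y ++ s) := by
  constructor
  · rintro ⟨hs, hsuf, hpre⟩
    by_cases hlen : s.length < w.length
    · exact Or.inr ⟨hs, hlen, hsuf⟩
    · exact Or.inl ⟨(suffix_append_iff_of_length_le (by omega)).1 hsuf, hpre⟩
  · rintro (⟨hsuf, hpre⟩ | ⟨hs, hlen, hsuf⟩)
    · refine ⟨?_, hsuf.trans (List.suffix_append _ _), hpre⟩
      rintro rfl
      exact hw (List.suffix_nil.1 hsuf)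
    · refine ⟨hs, hsuf, ?_⟩
      rw [Nat.sub_eq_zero_of_le hlen.le, List.take_zero, newEnds_nil]

end NewEnds

section GeneratingFunctions

variable {α : Type*} [Fintype α] [DecidableEq α]

noncomputable def genFun (P : List α → Prop) [DecidablePred P] : ℚ⟦X⟧ :=
  mk fun n => (#{s ∈ words α n | P s} : ℚ)

theorem coeff_genFun (P : List α → Prop) [DecidablePred P] (n : ℕ) :
    coeff n (genFun P) = #{s ∈ words α n | P s} :=
  coeff_mk _ _

theorem genFun_congr {P Q : List α → Prop} [DecidablePred P] [DecidablePred Q]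
    (h : ∀ s, P s ↔ Q s) : genFun P = genFun Q := by
  ext n
  simp only [coeff_genFun]
  congr 2
  exact filter_congr fun s _ => h s

theorem genFun_eq_mul {P Q R : List α → Prop} [DecidablePred P] [DecidablePred Q]
    [DecidablePred R] (hQ : ∀ v t, Q v → Q (v ++ t) → t = [])
    (hP : ∀ s, P s ↔ ∃ v z, s = v ++ z ∧ Q v ∧ R z) :
    genFun P = genFun Q * genFun R := by
  ext n
  rw [coeff_mul, coeff_genFun, card_filter_words_eq_sum_antidiagonal hQ hP]
  push_cast
  simp only [coeff_genFun]

theorem genFun_or {P Q : List α → Prop} [DecidablePred P] [DecidablePred Q]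
    (h : ∀ s, ¬(P s ∧ Q s)) : genFun (fun s => P s ∨ Q s) = genFun P + genFun Q := by
  ext n
  rw [map_add, coeff_genFun, coeff_genFun, coeff_genFun, filter_or,
    card_union_of_disjoint (disjoint_filter.2 fun s _ hP hQ => h s ⟨hP, hQ⟩)]
  push_cast
  rfl

theorem genFun_suffix (u : List α) (Q : List α → Prop) [DecidablePred Q] :
    genFun (fun s => u <:+ s ∧ Q (s.take (s.length - u.length))) = X ^ u.length * genFun Q := by
  ext n
  rw [coeff_X_pow_mul', coeff_genFun]
  split_ifs with hn
  · have himage : {s ∈ words α n | u <:+ s ∧ Q (s.take (s.length - u.length))} =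
        ({v ∈ words α (n - u.length) | Q v}).image (· ++ u) := by
      ext s
      simp only [mem_filter, mem_words, mem_image]
      constructor
      · rintro ⟨hs, hu, hQ⟩
        refine ⟨s.take (s.length - u.length), ⟨by simp; omega, hQ⟩, ?_⟩
        conv_rhs => rw [← List.take_append_drop (s.length - u.length) s]
        rw [← List.suffix_iff_eq_drop.1 hu]
      · rintro ⟨v, ⟨hv, hQ⟩, rfl⟩
        exact ⟨by simp; omega, List.suffix_append _ _, by simpa using hQ⟩
    rw [himage, card_image_of_injective _ (List.append_left_injective u), coeff_genFun]
  · rw [Nat.cast_eq_zero, card_eq_zero, filter_eq_empty_iff]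
    rintro s hs ⟨hu, -⟩
    have := hu.length_le
    rw [mem_words] at hs
    omega

noncomputable def autocorrelation (w : List α) : ℚ⟦X⟧ :=
  genFun fun z => z.length < w.length ∧ w <:+ w ++ z

theorem coeff_autocorrelation_eq_zero (w : List α) {n : ℕ} (hn : w.length ≤ n) :
    coeff n (autocorrelation w) = 0 := by
  rw [autocorrelation, coeff_genFun, Nat.cast_eq_zero, card_eq_zero, filter_eq_empty_iff]
  rintro z hz ⟨hlen, -⟩
  rw [mem_words] at hz
  omega

theorem card_suffix_append_self (w : List α) (i : ℕ) :
    #{z ∈ words α i | z.length < w.length ∧ w <:+ w ++ z} =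
      if i < w.length ∧ w.take (w.length - i) = w.drop i then 1 else 0 := by
  split_ifs with h
  · rw [card_eq_one]
    refine ⟨w.drop (w.length - i), ?_⟩
    ext z
    simp only [mem_filter, mem_words, mem_singleton]
    constructor
    · rintro ⟨hz, -, hsuf⟩
      exact ((suffix_append_self_iff hz h.1.le).1 hsuf).2
    · rintro rfl
      have hz : (w.drop (w.length - i)).length = i := by simp; omega
      exact ⟨hz, by omega, (suffix_append_self_iff hz h.1.le).2 ⟨h.2, rfl⟩⟩
  · rw [card_eq_zero, filter_eq_empty_iff]
    rintro z hz ⟨hlen, hsuf⟩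
    rw [mem_words] at hz
    exact h ⟨hz ▸ hlen, ((suffix_append_self_iff hz (by omega)).1 hsuf).1⟩

end GeneratingFunctions

section Renewal

theorem mul_eq_of_renewal {R : Type*} [CommRing R] {q x a c n m : R} (h1 : q * n = 1 - m)
    (h2 : x * n + c = m * a) : (q * a + x) * n = a - c ∧ (q * a + x) * m = q * c + x :=
  ⟨by linear_combination a * h1 + h2, by linear_combination x * h1 - q * h2⟩

variable {α : Type*} [Fintype α] [DecidableEq α]

theorem card_newEnds_eq_zero_succ_add (w y : List α) (n : ℕ) :
    #{s ∈ words α (n + 1) | newEnds w y s = 0} +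
        #{s ∈ words α (n + 1) | newEnds w y s = 1 ∧ w <:+ y ++ s} =
      Fintype.card α * #{s ∈ words α n | newEnds w y s = 0} := by
  have hsnoc : ∀ a : α, #{s ∈ words α n | newEnds w y (s ++ [a]) = 0} +
      #{s ∈ words α n | newEnds w y (s ++ [a]) = 1 ∧ w <:+ y ++ (s ++ [a])} =
        #{s ∈ words α n | newEnds w y s = 0} := by
    intro a
    rw [← card_union_of_disjoint
      (disjoint_filter.2 fun s _ h0 h1 => zero_ne_one (h0.symm.trans h1.1)), ← filter_or]
    refine congrArg card (filter_congr fun s _ => ?_)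
    rw [newEnds_append_singleton, List.append_assoc]
    by_cases hs : w <:+ y ++ (s ++ [a]) <;> simp [hs]
  rw [card_filter_words_succ, card_filter_words_succ, ← sum_add_distrib,
    sum_congr rfl fun a _ => hsnoc a, sum_const, card_univ, smul_eq_mul]

/-- Appending a letter to a word without new occurrence either keeps it so or creates the first
new occurrence. -/
theorem one_sub_mul_genFun_newEnds_eq_zero (w y : List α) :
    (1 - C (Fintype.card α : ℚ) * X) * genFun (fun s => newEnds w y s = 0) =
      1 - genFun (fun s => newEnds w y s = 1 ∧ w <:+ y ++ s) := by
  ext n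
  rcases n with _ | n
  · rw [sub_mul, one_mul, map_sub, map_sub, mul_assoc, coeff_C_mul, coeff_zero_X_mul, coeff_one,
      if_pos rfl, coeff_genFun, coeff_genFun, words_zero, filter_singleton, filter_singleton]
    simp
  · have h : (#{s ∈ words α (n + 1) | newEnds w y s = 0} : ℚ) +
        #{s ∈ words α (n + 1) | newEnds w y s = 1 ∧ w <:+ y ++ s} =
          Fintype.card α * #{s ∈ words α n | newEnds w y s = 0} := by
      exact_mod_cast card_newEnds_eq_zero_succ_add w y n
    rw [sub_mul, one_mul, map_sub, map_sub, mul_assoc, coeff_C_mul, coeff_succ_X_mul, coeff_one,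
      if_neg n.succ_ne_zero, coeff_genFun, coeff_genFun, coeff_genFun]
    linarith

/-- Cut after the first new occurrence, the rest follows a copy of `w`. -/
theorem genFun_newEnds_eq_succ (w y : List α) (k : ℕ) :
    genFun (fun s => newEnds w y s = k + 1) =
      genFun (fun s => newEnds w y s = 1 ∧ w <:+ y ++ s) *
        genFun (fun s => newEnds w w s = k) :=
  genFun_eq_mul (fun _ _ => eq_nil_of_newEnds_eq_one) fun _ => newEnds_eq_succ_iff

theorem genFun_newEnds_self (w : List α) (k : ℕ) :
    genFun (fun s => newEnds w w s = k) =
      genFun (fun s => newEnds w w s = 1 ∧ w <:+ w ++ s) ^ k *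
        genFun (fun s => newEnds w w s = 0) := by
  induction k with
  | zero => rw [pow_zero, one_mul]
  | succ k ih => rw [genFun_newEnds_eq_succ, ih, pow_succ', mul_assoc]

/-- Cut after the first new occurrence, the rest is shorter than `w` and overlaps it. -/
theorem genFun_overlap (w y : List α) :
    genFun (fun s => s ≠ [] ∧ w <:+ y ++ s ∧ newEnds w y (s.take (s.length - w.length)) = 0) =
      genFun (fun s => newEnds w y s = 1 ∧ w <:+ y ++ s) * autocorrelation w :=
  genFun_eq_mul (fun _ _ => eq_nil_of_newEnds_eq_one) fun _ => overlap_iff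

theorem genFun_overlap_eq_add (w y : List α) (hw : w ≠ []) :
    genFun (fun s => s ≠ [] ∧ w <:+ y ++ s ∧ newEnds w y (s.take (s.length - w.length)) = 0) =
      X ^ w.length * genFun (fun s => newEnds w y s = 0) +
        genFun (fun s => s ≠ [] ∧ s.length < w.length ∧ w <:+ y ++ s) := by
  rw [genFun_congr fun s => overlap_iff_or hw, genFun_or]
  · congr 1
    exact genFun_suffix w fun s => newEnds w y s = 0
  rintro s ⟨⟨hsuf, -⟩, -, hlen, -⟩
  have := hsuf.length_le
  omega

theorem genFun_short_suffix_nil (w : List α) :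
    genFun (fun s => s ≠ [] ∧ s.length < w.length ∧ w <:+ [] ++ s) = 0 := by
  ext n
  rw [coeff_genFun, map_zero, Nat.cast_eq_zero, card_eq_zero, filter_eq_empty_iff]
  rintro s - ⟨-, hlen, hsuf⟩
  have := hsuf.length_le
  simp only [List.nil_append] at this
  omega

theorem genFun_short_suffix_self (w : List α) (hw : w ≠ []) :
    genFun (fun s => s ≠ [] ∧ s.length < w.length ∧ w <:+ w ++ s) =
      autocorrelation w - 1 := by
  ext n
  rw [autocorrelation, map_sub, coeff_genFun, coeff_genFun, coeff_one]
  rcases n with _ | n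
  · rw [words_zero, filter_singleton, filter_singleton, if_neg (by simp),
      if_pos ⟨List.length_pos_iff.2 hw, by simp⟩]
    simp
  · rw [if_neg n.succ_ne_zero, sub_zero]
    congr 2
    refine filter_congr fun s hs => ?_
    rw [mem_words] at hs
    simp [← List.length_pos_iff, hs]

theorem X_pow_mul_add_eq (w y : List α) (hw : w ≠ []) :
    X ^ w.length * genFun (fun s => newEnds w y s = 0) +
        genFun (fun s => s ≠ [] ∧ s.length < w.length ∧ w <:+ y ++ s) =
      genFun (fun s => newEnds w y s = 1 ∧ w <:+ y ++ s) * autocorrelation w := by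
  rw [← genFun_overlap_eq_add w y hw, genFun_overlap]

noncomputable def denominator (w : List α) : ℚ⟦X⟧ :=
  (1 - C (Fintype.card α : ℚ) * X) * autocorrelation w + X ^ w.length

theorem denominator_mul_nil (w : List α) (hw : w ≠ []) :
    denominator w *
        genFun (fun s => newEnds w [] s = 0) = autocorrelation w ∧
      denominator w *
        genFun (fun s => newEnds w [] s = 1 ∧ w <:+ [] ++ s) = X ^ w.length := by
  have h := mul_eq_of_renewal (one_sub_mul_genFun_newEnds_eq_zero w [])
    (X_pow_mul_add_eq w [] hw)
  rwa [genFun_short_suffix_nil, sub_zero, mul_zero, zero_add] at h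

theorem denominator_mul_self (w : List α) (hw : w ≠ []) :
    denominator w *
        genFun (fun s => newEnds w w s = 0) = 1 ∧
      denominator w *
        genFun (fun s => newEnds w w s = 1 ∧ w <:+ w ++ s) =
      (1 - C (Fintype.card α : ℚ) * X) * (autocorrelation w - 1) + X ^ w.length := by
  have h := mul_eq_of_renewal (one_sub_mul_genFun_newEnds_eq_zero w w)
    (X_pow_mul_add_eq w w hw)
  rwa [genFun_short_suffix_self w hw, sub_sub_cancel] at h

theorem denominator_pow_mul_genFun_newEnds_succ (w : List α) (hw : w ≠ []) (k : ℕ) :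
    denominator w ^ (k + 2) *
        genFun (fun s => newEnds w [] s = k + 1) =
      X ^ w.length *
        ((1 - C (Fintype.card α : ℚ) * X) * (autocorrelation w - 1) + X ^ w.length) ^ k := by
  obtain ⟨-, hM⟩ := denominator_mul_nil w hw
  obtain ⟨hE, hD⟩ := denominator_mul_self w hw
  rw [genFun_newEnds_eq_succ, genFun_newEnds_self]
  have hsplit : ∀ F M D E : ℚ⟦X⟧,
      F ^ (k + 2) * (M * (D ^ k * E)) = F * M * (F * D) ^ k * (F * E) := fun _ _ _ _ => by ring
  rw [hsplit, hM, hD, hE, mul_one]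

end Renewal

section Evaluation

theorem cast_coeff_mul_mul_pow (φ ψ : ℚ⟦X⟧) (r : ℝ) (n : ℕ) :
    ((coeff n (φ * ψ) : ℚ) : ℝ) * r ^ n = ∑ ij ∈ antidiagonal n,
      ((coeff ij.1 φ : ℚ) : ℝ) * r ^ ij.1 * (((coeff ij.2 ψ : ℚ) : ℝ) * r ^ ij.2) := by
  rw [coeff_mul, Rat.cast_sum, sum_mul]
  refine sum_congr rfl fun ij hij => ?_
  rw [HasAntidiagonal.mem_antidiagonal] at hij
  rw [← hij, pow_add, Rat.cast_mul]
  ring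

def convergentAt (r : ℝ) : Subring ℚ⟦X⟧ where
  carrier := {φ | Summable fun n => ‖((coeff n φ : ℚ) : ℝ) * r ^ n‖}
  zero_mem' := by simp
  one_mem' := by
    refine summable_of_ne_finset_zero (s := {0}) fun n hn => ?_
    rw [mem_singleton] at hn
    simp [coeff_one, hn]
  add_mem' {φ ψ} hφ hψ := by
    refine Summable.of_nonneg_of_le (fun _ => norm_nonneg _) (fun n => ?_) (hφ.add hψ)
    rw [map_add, Rat.cast_add, add_mul]
    exact norm_add_le _ _
  neg_mem' {φ} hφ := by simpa using hφ
  mul_mem' {φ ψ} hφ hψ := by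
    show Summable _
    simpa only [cast_coeff_mul_mul_pow] using
      summable_norm_sum_mul_antidiagonal_of_summable_norm hφ hψ

/-- Only meaningful on `convergentAt r`: elsewhere the `tsum` is `0`. -/
noncomputable def evalAt (r : ℝ) (φ : ℚ⟦X⟧) : ℝ :=
  ∑' n, ((coeff n φ : ℚ) : ℝ) * r ^ n

variable {r : ℝ} {φ ψ : ℚ⟦X⟧}

theorem summable_of_mem_convergentAt (hφ : φ ∈ convergentAt r) :
    Summable fun n => ((coeff n φ : ℚ) : ℝ) * r ^ n :=
  Summable.of_norm hφ

theorem mem_convergentAt_of_coeff_eq_zero {N : ℕ} (h : ∀ n, N ≤ n → coeff n φ = 0) :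
    φ ∈ convergentAt r :=
  summable_of_ne_finset_zero (s := range N) fun n hn => by
    simp [h n (by simpa using hn)]

theorem evalAt_eq_sum_of_coeff_eq_zero {N : ℕ} (h : ∀ n, N ≤ n → coeff n φ = 0) :
    evalAt r φ = ∑ n ∈ range N, ((coeff n φ : ℚ) : ℝ) * r ^ n :=
  tsum_eq_sum fun n hn => by simp [h n (by simpa using hn)]

theorem C_mem_convergentAt (a : ℚ) : C a ∈ convergentAt r :=
  mem_convergentAt_of_coeff_eq_zero (N := 1) fun n hn => by
    rw [coeff_C, if_neg (by omega)]

theorem evalAt_C (a : ℚ) : evalAt r (C a) = a := by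
  rw [evalAt_eq_sum_of_coeff_eq_zero (N := 1) fun n hn => by rw [coeff_C, if_neg (by omega)]]
  simp

theorem evalAt_one : evalAt r 1 = 1 := by
  rw [← map_one (C (R := ℚ)), evalAt_C, Rat.cast_one]

theorem X_mem_convergentAt : (X : ℚ⟦X⟧) ∈ convergentAt r :=
  mem_convergentAt_of_coeff_eq_zero (N := 2) fun n hn => by
    rw [coeff_X, if_neg (by omega)]

theorem evalAt_X : evalAt r X = r := by
  rw [evalAt_eq_sum_of_coeff_eq_zero (N := 2) fun n hn => by rw [coeff_X, if_neg (by omega)]]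
  simp [sum_range_succ]

theorem evalAt_add (hφ : φ ∈ convergentAt r) (hψ : ψ ∈ convergentAt r) :
    evalAt r (φ + ψ) = evalAt r φ + evalAt r ψ := by
  simp only [evalAt, map_add, Rat.cast_add, add_mul]
  exact (summable_of_mem_convergentAt hφ).tsum_add (summable_of_mem_convergentAt hψ)

theorem evalAt_sub (hφ : φ ∈ convergentAt r) (hψ : ψ ∈ convergentAt r) :
    evalAt r (φ - ψ) = evalAt r φ - evalAt r ψ := by
  simp only [evalAt, map_sub, Rat.cast_sub, sub_mul]
  exact (summable_of_mem_convergentAt hφ).tsum_sub (summable_of_mem_convergentAt hψ)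

theorem evalAt_mul (hφ : φ ∈ convergentAt r) (hψ : ψ ∈ convergentAt r) :
    evalAt r (φ * ψ) = evalAt r φ * evalAt r ψ := by
  rw [evalAt, evalAt, evalAt, tsum_mul_tsum_eq_tsum_sum_antidiagonal_of_summable_norm hφ hψ]
  exact tsum_congr fun n => cast_coeff_mul_mul_pow φ ψ r n

theorem evalAt_pow (hφ : φ ∈ convergentAt r) (k : ℕ) :
    evalAt r (φ ^ k) = evalAt r φ ^ k := by
  induction k with
  | zero => rw [pow_zero, pow_zero, evalAt_one]
  | succ k ih => rw [pow_succ, evalAt_mul (pow_mem hφ k) hφ, ih, pow_succ]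

theorem one_sub_C_mul_X_mem_convergentAt (a : ℚ) : 1 - C a * X ∈ convergentAt r :=
  sub_mem (one_mem _) (mul_mem (C_mem_convergentAt a) X_mem_convergentAt)

theorem evalAt_one_sub_C_mul_X (a : ℚ) : evalAt r (1 - C a * X) = 1 - a * r := by
  rw [evalAt_sub (one_mem _) (mul_mem (C_mem_convergentAt a) X_mem_convergentAt),
    evalAt_mul (C_mem_convergentAt a) X_mem_convergentAt, evalAt_one, evalAt_C, evalAt_X]

theorem evalAt_one_sub_natCast_mul_X {n : ℕ} (hn : 0 < n) :
    evalAt (n : ℝ)⁻¹ (1 - C (n : ℚ) * X) = 0 := by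
  rw [evalAt_one_sub_C_mul_X, Rat.cast_natCast, mul_inv_cancel₀ (by positivity), sub_self]

theorem summable_of_add_le_mul {f : ℕ → ℝ} {p : ℕ} {θ : ℝ} (hf : ∀ n, 0 ≤ f n)
    (hθ : θ < 1) (h : ∀ n, f (n + p) ≤ θ * f n) : Summable f := by
  refine summable_of_sum_range_le hf (c := (∑ i ∈ range p, f i) / (1 - θ)) fun N => ?_
  have hmono : ∑ i ∈ range N, f i ≤ ∑ i ∈ range (p + N), f i :=
    sum_le_sum_of_subset_of_nonneg (range_mono (by omega)) fun i _ _ => hf i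
  have hshift : ∑ i ∈ range N, f (p + i) ≤ θ * ∑ i ∈ range N, f i := by
    rw [mul_sum]
    exact sum_le_sum fun i _ => add_comm p i ▸ h i
  rw [sum_range_add] at hmono
  rw [le_div_iff₀ (sub_pos.2 hθ)]
  linarith

end Evaluation

section TotalMass

variable {α : Type*} [Fintype α] [DecidableEq α]

theorem card_newEnds_eq_zero_add_length_le (w y : List α) (hw : w ≠ []) (n : ℕ) :
    #{s ∈ words α (n + w.length) | newEnds w y s = 0} ≤
      #{s ∈ words α n | newEnds w y s = 0} * (Fintype.card α ^ w.length - 1) := by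
  rw [← card_words, ← card_erase_of_mem (mem_words.2 rfl), ← card_product]
  refine card_le_card_of_injOn (fun s => (s.take n, s.drop n)) (fun s hs => ?_) ?_
  · simp only [mem_coe, mem_filter, mem_words] at hs
    have hsplit := newEnds_append w y (s.take n) (s.drop n)
    rw [List.take_append_drop, hs.2] at hsplit
    simp only [mem_coe, mem_product, mem_filter, mem_erase, mem_words, List.length_take,
      List.length_drop, hs.1]
    refine ⟨⟨by omega, by omega⟩, fun hdrop => ?_, by omega⟩
    have hs0 : s ≠ [] := List.ne_nil_of_length_pos (by
      rw [hs.1]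
      exact Nat.add_pos_right n (List.length_pos_iff.2 hw))
    have := newEnds_pos (w := w) (y := y) hs0
      (by rw [← List.take_append_drop n s, hdrop, ← List.append_assoc]
          exact List.suffix_append _ _)
    omega
  · intro s _ t _ hst
    simp only [Prod.mk.injEq] at hst
    rw [← List.take_append_drop n s, hst.1, hst.2, List.take_append_drop]

theorem genFun_newEnds_zero_mem_convergentAt {w : List α} (hw : w ≠ []) (y : List α) :
    genFun (fun s => newEnds w y s = 0) ∈ convergentAt (Fintype.card α : ℝ)⁻¹ := by
  have hb : 0 < Fintype.card α := card_pos_of_ne_nil hw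
  set r : ℝ := (Fintype.card α : ℝ)⁻¹
  have hr : 0 < r := by positivity
  have hbr : ((Fintype.card α : ℝ) * r) ^ w.length = 1 := by
    rw [mul_inv_cancel₀ (by positivity), one_pow]
  set N : ℕ → ℝ := fun n => #{s ∈ words α n | newEnds w y s = 0}
  have hdecay : ∀ n, N (n + w.length) ≤ N n * ((Fintype.card α : ℝ) ^ w.length - 1) := by
    intro n
    have h := card_newEnds_eq_zero_add_length_le w y hw n
    have h1 : 1 ≤ Fintype.card α ^ w.length := Nat.one_le_pow _ _ hb
    have hcast := Nat.cast_le (α := ℝ) |>.2 h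
    push_cast [Nat.cast_sub h1] at hcast
    exact hcast
  show Summable _
  simp only [coeff_genFun, Rat.cast_natCast, norm_mul, norm_pow, Real.norm_eq_abs,
    abs_of_pos hr, Nat.abs_cast]
  refine summable_of_add_le_mul (θ := 1 - r ^ w.length) (p := w.length) (fun n => by positivity)
    (by linarith [pow_pos hr w.length]) fun n => ?_
  calc N (n + w.length) * r ^ (n + w.length)
      ≤ N n * ((Fintype.card α : ℝ) ^ w.length - 1) * r ^ (n + w.length) :=
        mul_le_mul_of_nonneg_right (hdecay n) (by positivity)
    _ = (1 - r ^ w.length) * (N n * r ^ n) := by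
        rw [pow_add]
        linear_combination (N n * r ^ n) * hbr

theorem genFun_first_mem_convergentAt_and_evalAt {w : List α} (hw : w ≠ []) (y : List α) :
    genFun (fun s => newEnds w y s = 1 ∧ w <:+ y ++ s) ∈
        convergentAt (Fintype.card α : ℝ)⁻¹ ∧
      evalAt (Fintype.card α : ℝ)⁻¹ (genFun fun s => newEnds w y s = 1 ∧ w <:+ y ++ s) =
        1 := by
  have hα : 0 < Fintype.card α := card_pos_of_ne_nil hw
  have hq := one_sub_C_mul_X_mem_convergentAt (r := (Fintype.card α : ℝ)⁻¹) (Fintype.card α)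
  have hN := genFun_newEnds_zero_mem_convergentAt hw y
  rw [← sub_sub_cancel 1 (genFun _), ← one_sub_mul_genFun_newEnds_eq_zero]
  refine ⟨sub_mem (one_mem _) (mul_mem hq hN), ?_⟩
  rw [evalAt_sub (one_mem _) (mul_mem hq hN), evalAt_mul hq hN, evalAt_one_sub_natCast_mul_X hα,
    zero_mul, evalAt_one, sub_zero]

theorem denominator_mem_convergentAt_and_evalAt {w : List α} (hw : w ≠ []) :
    denominator w ∈ convergentAt (Fintype.card α : ℝ)⁻¹ ∧
      evalAt (Fintype.card α : ℝ)⁻¹ (denominator w) =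
        ((Fintype.card α : ℝ)⁻¹) ^ w.length := by
  have hα : 0 < Fintype.card α := card_pos_of_ne_nil hw
  have hq := one_sub_C_mul_X_mem_convergentAt (r := (Fintype.card α : ℝ)⁻¹) (Fintype.card α)
  have hA : autocorrelation w ∈ convergentAt (Fintype.card α : ℝ)⁻¹ :=
    mem_convergentAt_of_coeff_eq_zero fun _ => coeff_autocorrelation_eq_zero w
  have hX : (X : ℚ⟦X⟧) ^ w.length ∈ convergentAt (Fintype.card α : ℝ)⁻¹ :=
    pow_mem X_mem_convergentAt _
  refine ⟨add_mem (mul_mem hq hA) hX, ?_⟩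
  rw [denominator, evalAt_add (mul_mem hq hA) hX, evalAt_mul hq hA,
    evalAt_one_sub_natCast_mul_X hα, evalAt_pow X_mem_convergentAt, evalAt_X, zero_mul, zero_add]

theorem evalAt_genFun_newEnds_self_zero {w : List α} (hw : w ≠ []) :
    evalAt (Fintype.card α : ℝ)⁻¹ (genFun fun s => newEnds w w s = 0) =
      (Fintype.card α : ℝ) ^ w.length := by
  obtain ⟨hF, hFeval⟩ := denominator_mem_convergentAt_and_evalAt hw
  have h := congrArg (evalAt (Fintype.card α : ℝ)⁻¹) (denominator_mul_self w hw).1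
  rw [evalAt_mul hF (genFun_newEnds_zero_mem_convergentAt hw w), hFeval, evalAt_one] at h
  rw [eq_inv_of_mul_eq_one_right h, inv_pow, inv_inv]

theorem evalAt_genFun_newEnds_succ {w : List α} (hw : w ≠ []) (k : ℕ) :
    evalAt (Fintype.card α : ℝ)⁻¹ (genFun fun s => newEnds w [] s = k + 1) =
      (Fintype.card α : ℝ) ^ w.length := by
  obtain ⟨hM, hMeval⟩ := genFun_first_mem_convergentAt_and_evalAt hw []
  obtain ⟨hD, hDeval⟩ := genFun_first_mem_convergentAt_and_evalAt hw w
  have hE := genFun_newEnds_zero_mem_convergentAt hw w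
  rw [genFun_newEnds_eq_succ, genFun_newEnds_self, evalAt_mul hM (mul_mem (pow_mem hD k) hE),
    evalAt_mul (pow_mem hD k) hE, evalAt_pow hD, hMeval, hDeval, evalAt_genFun_newEnds_self_zero hw,
    one_pow, one_mul, one_mul]

theorem evalAt_genFun_newEnds_zero {w : List α} (hw : w ≠ []) :
    evalAt (Fintype.card α : ℝ)⁻¹ (genFun fun s => newEnds w [] s = 0) =
      (Fintype.card α : ℝ) ^ w.length *
        evalAt (Fintype.card α : ℝ)⁻¹ (autocorrelation w) := by
  have hα : 0 < Fintype.card α := card_pos_of_ne_nil hw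
  obtain ⟨hF, hFeval⟩ := denominator_mem_convergentAt_and_evalAt hw
  have h := congrArg (evalAt (Fintype.card α : ℝ)⁻¹) (denominator_mul_nil w hw).1
  rw [evalAt_mul hF (genFun_newEnds_zero_mem_convergentAt hw []), hFeval] at h
  rw [← h, ← mul_assoc, ← mul_pow, mul_inv_cancel₀ (by positivity), one_pow, one_mul]

end TotalMass

section Blocks

variable {b : ℕ}

theorem coeff_Aw (w : List (Fin b)) (i : ℕ) :
    coeff i (Aw b w) = if i < w.length ∧ w.take (w.length - i) = w.drop i then 1 else 0 := by
  simp only [Aw, map_sum, apply_ite (coeff i), coeff_X_pow, map_zero]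
  by_cases hi : i < w.length
  · rw [sum_eq_single_of_mem i (mem_range.2 hi) fun x _ hx => by simp [Ne.symm hx]]
    simp [hi]
  · rw [sum_eq_zero fun x hx => by simp [show i ≠ x by simp at hx; omega], if_neg (by tauto)]

theorem Aw_eq_autocorrelation (w : List (Fin b)) : Aw b w = autocorrelation w := by
  ext i
  rw [coeff_Aw, autocorrelation, coeff_genFun, card_suffix_append_self]
  split_ifs <;> simp

theorem evalAt_Aw (w : List (Fin b)) (r : ℝ) :
    evalAt r (Aw b w) =
      ∑ i ∈ range w.length, if w.take (w.length - i) = w.drop i then r ^ i else 0 := by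
  rw [evalAt_eq_sum_of_coeff_eq_zero (N := w.length) fun n hn => by
    rw [coeff_Aw, if_neg (by omega)]]
  refine sum_congr rfl fun i hi => ?_
  rw [coeff_Aw, if_congr (and_iff_right (mem_range.1 hi)) rfl rfl]
  split_ifs <;> simp

theorem Nxy_nil_nil {w : List (Fin b)} (hw : w ≠ []) (k l : ℕ) :
    Nxy b w [] [] k l = #{s ∈ words (Fin b) l | newEnds w [] s = k} := by
  rw [Nxy, Fintype.card_subtype, words, filter_image,
    card_image_of_injective _ List.ofFn_injective]
  congr 1
  refine filter_congr fun f _ => ?_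
  simp [newEnds_nil_left_eq_occCount hw]

theorem Zser_nil_nil {w : List (Fin b)} (hw : w ≠ []) (k : ℕ) :
    Zser b w [] [] k = genFun fun s => newEnds w [] s = k := by
  ext l
  rw [Zser, coeff_mk, coeff_genFun, Nxy_nil_nil hw]

end Blocks

end Occurrences

theorem stmt15_general (b : ℕ) (w : List (Fin b)) (hw : 1 ≤ w.length) :
    (∀ k : ℕ, 1 ≤ k →
      ((1 - PowerSeries.C (R := ℚ) (b : ℚ) * X) * Aw b w + X ^ w.length) ^ (k + 1) *
          Zser b w [] [] k =
        X ^ w.length *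
          ((1 - PowerSeries.C (R := ℚ) (b : ℚ) * X) * (Aw b w - 1) + X ^ w.length) ^ (k - 1)) ∧
    (∀ k : ℕ, 1 ≤ k →
      ∑' l : ℕ, (Nxy b w [] [] k l : ℝ) * ((b : ℝ)⁻¹) ^ l = (b : ℝ) ^ w.length) ∧
    ∑' l : ℕ, (Nxy b w [] [] 0 l : ℝ) * ((b : ℝ)⁻¹) ^ l =
      (b : ℝ) ^ w.length *
        ∑ i ∈ Finset.range w.length,
          (if w.take (w.length - i) = w.drop i then ((b : ℝ)⁻¹) ^ i else 0) := by
  have hne : w ≠ [] := List.length_pos_iff.1 hw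
  have hcard : Fintype.card (Fin b) = b := Fintype.card_fin b
  have htsum : ∀ k, ∑' l : ℕ, (Nxy b w [] [] k l : ℝ) * ((b : ℝ)⁻¹) ^ l =
      Occurrences.evalAt (b : ℝ)⁻¹
        (Occurrences.genFun fun s => Occurrences.newEnds w [] s = k) :=
    fun k => by simp [← Occurrences.Zser_nil_nil hne, Occurrences.evalAt, Zser]
  refine ⟨fun k hk => ?_, fun k hk => ?_, ?_⟩
  · obtain ⟨j, rfl⟩ := Nat.exists_eq_add_of_le' hk
    have h := Occurrences.denominator_pow_mul_genFun_newEnds_succ w hne j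
    rwa [Occurrences.denominator, hcard, ← Occurrences.Aw_eq_autocorrelation,
      ← Occurrences.Zser_nil_nil hne] at h
  · obtain ⟨j, rfl⟩ := Nat.exists_eq_add_of_le' hk
    have h := Occurrences.evalAt_genFun_newEnds_succ hne j
    rwa [hcard, ← htsum] at h
  · have h := Occurrences.evalAt_genFun_newEnds_zero hne
    rwa [hcard, ← htsum, ← Occurrences.Aw_eq_autocorrelation, Occurrences.evalAt_Aw] at h

/-- For `k ≥ 1`, `Z_w(k) = t^p ((1-bt)(A_w-1) + t^p)^{k-1} / ((1-bt)A_w + t^p)^{k+1}`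
(stated multiplied through by the denominator); in particular the total masses are
`Z_w(k)(1/b) = b^p` for `k ≥ 1` and `Z_w(0)(1/b) = b^p A_w(1/b)`. -/
theorem stmt15 (b : ℕ) (hb : 1 < b) (w : List (Fin b)) (hw : 1 ≤ w.length) :
    (∀ k : ℕ, 1 ≤ k →
      ((1 - PowerSeries.C (R := ℚ) (b : ℚ) * X) * Aw b w + X ^ w.length) ^ (k + 1) *
          Zser b w [] [] k =
        X ^ w.length *
          ((1 - PowerSeries.C (R := ℚ) (b : ℚ) * X) * (Aw b w - 1) + X ^ w.length) ^ (k - 1)) ∧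
    (∀ k : ℕ, 1 ≤ k →
      ∑' l : ℕ, (Nxy b w [] [] k l : ℝ) * ((b : ℝ)⁻¹) ^ l = (b : ℝ) ^ w.length) ∧
    ∑' l : ℕ, (Nxy b w [] [] 0 l : ℝ) * ((b : ℝ)⁻¹) ^ l =
      (b : ℝ) ^ w.length *
        ∑ i ∈ Finset.range w.length,
          (if w.take (w.length - i) = w.drop i then ((b : ℝ)⁻¹) ^ i else 0) :=
  stmt15_general b w hw
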